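/- arXiv:2101.04494 — 2 statements merged into one kernel-verified Lean document; each statement's English description precedes it below -/
import Mathlib

section
/- Let ξ₁, ξ₂, ξ₃ be derivations (Lie derivative operators L₁, L₂, L₃) on a vector space satisfying the commutation relations [L₁,L₂] = 2L₃, [L₂,L₃] = 2L₁, [L₃,L₁] = 2L₂ (coming from the su(2) brackets [ξ₁,ξ₂]=2ξ₃ etc.). Define the operator C on triples (σ₁,σ₂,σ₃) by C(σ)_a = L_b σ_c − L_c σ_b (cyclic in abc), define L_ξ σ = (L₁σ, L₂σ, L₃σ) for a single element σ, its adjoint-type operator L_ξ* (σ₁,σ₂,σ₃) = −(L₁σ₁ + L₂σ₂ + L₃σ₃), and the Casimir 𝒞 = −(L₁² + L₂² + L₃²) acting componentwise. Then C² = 2C + 𝒞 − L_ξ ∘ L_ξ* as operators on triples. -/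
/-- C² = 2C + 𝒞 − L_ξ ∘ L_ξ* on triples, from the su(2) relations. -/
theorem stmt2 {V : Type*} [AddCommGroup V] [Module ℝ V]
    (L1 L2 L3 : Module.End ℝ V)
    (h12 : L1 * L2 - L2 * L1 = 2 • L3)
    (h23 : L2 * L3 - L3 * L2 = 2 • L1)
    (h31 : L3 * L1 - L1 * L3 = 2 • L2) :
    ∀ σ1 σ2 σ3 : V,
      (fun σ : V × V × V =>
          (L2 σ.2.2 - L3 σ.2.1, L3 σ.1 - L1 σ.2.2, L1 σ.2.1 - L2 σ.1))
        ((fun σ : V × V × V =>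
          (L2 σ.2.2 - L3 σ.2.1, L3 σ.1 - L1 σ.2.2, L1 σ.2.1 - L2 σ.1)) (σ1, σ2, σ3)) =
      2 • ((fun σ : V × V × V =>
          (L2 σ.2.2 - L3 σ.2.1, L3 σ.1 - L1 σ.2.2, L1 σ.2.1 - L2 σ.1)) (σ1, σ2, σ3)) +
      (-(L1 (L1 σ1) + L2 (L2 σ1) + L3 (L3 σ1)),
       -(L1 (L1 σ2) + L2 (L2 σ2) + L3 (L3 σ2)),
       -(L1 (L1 σ3) + L2 (L2 σ3) + L3 (L3 σ3))) -
      (L1 (-(L1 σ1 + L2 σ2 + L3 σ3)),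
       L2 (-(L1 σ1 + L2 σ2 + L3 σ3)),
       L3 (-(L1 σ1 + L2 σ2 + L3 σ3))) := by
  intro σ1 σ2 σ3
  have e12 : ∀ x : V, L2 (L1 x) = L1 (L2 x) - 2 • L3 x := fun x => by
    have h := LinearMap.ext_iff.mp h12 x
    simp only [LinearMap.sub_apply, Module.End.mul_apply, LinearMap.smul_apply] at h
    rw [← h]; abel
  have e23 : ∀ x : V, L3 (L2 x) = L2 (L3 x) - 2 • L1 x := fun x => by
    have h := LinearMap.ext_iff.mp h23 x
    simp only [LinearMap.sub_apply, Module.End.mul_apply, LinearMap.smul_apply] at h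
    rw [← h]; abel
  have e31 : ∀ x : V, L3 (L1 x) = L1 (L3 x) + 2 • L2 x := fun x => by
    have h := LinearMap.ext_iff.mp h31 x
    simp only [LinearMap.sub_apply, Module.End.mul_apply, LinearMap.smul_apply] at h
    rw [← h]; abel
  simp only [map_sub, map_add, map_neg, Prod.smul_mk, Prod.mk_add_mk, Prod.mk_sub_mk,
    Prod.mk.injEq, e12, e23, e31]
  refine ⟨?_, ?_, ?_⟩ <;> abel
end

section
/- Let I₁, I₂, I₃ be endomorphisms of a 4-dimensional real inner product space H satisfying the quaternion relations I_aI_b = −I_bI_a = I_c (cyclic) and I_a² = −Id, each I_a skew-adjoint. For σ = (σ₁, σ₂, σ₃) a triple of skew-symmetric endomorphisms of H each commuting with I₁, I₂, I₃ (i.e. anti-self-dual 2-forms), define s(σ) = σ₁∘I₁ + σ₂∘I₂ + σ₃∘I₃. Then s(σ) is symmetric and trace-free, and moreover for each a: s(σ)∘I_a + I_a∘s(σ) = −2σ_a. -/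
open RealInnerProductSpace

/-- The map s(σ) = Σ σ_a ∘ I_a sends triples of anti-self-dual 2-forms (skew-adjoint
endomorphisms commuting with the quaternionic structure) to symmetric trace-free
endomorphisms, and s(σ)I_a + I_a s(σ) = −2σ_a. -/
theorem stmt13 {H : Type*} [NormedAddCommGroup H] [InnerProductSpace ℝ H]
    [FiniteDimensional ℝ H] (hdim : Module.finrank ℝ H = 4)
    (I1 I2 I3 : Module.End ℝ H)
    (hI12 : I1 * I2 = I3) (hI21 : I2 * I1 = -I3)
    (hI23 : I2 * I3 = I1) (hI32 : I3 * I2 = -I1)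
    (hI31 : I3 * I1 = I2) (hI13 : I1 * I3 = -I2)
    (hI1 : I1 * I1 = -1) (hI2 : I2 * I2 = -1) (hI3 : I3 * I3 = -1)
    (hIskew1 : ∀ x y : H, ⟪I1 x, y⟫ = -⟪x, I1 y⟫)
    (hIskew2 : ∀ x y : H, ⟪I2 x, y⟫ = -⟪x, I2 y⟫)
    (hIskew3 : ∀ x y : H, ⟪I3 x, y⟫ = -⟪x, I3 y⟫)
    (σ1 σ2 σ3 : Module.End ℝ H)
    (hs1 : ∀ x y : H, ⟪σ1 x, y⟫ = -⟪x, σ1 y⟫)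
    (hs2 : ∀ x y : H, ⟪σ2 x, y⟫ = -⟪x, σ2 y⟫)
    (hs3 : ∀ x y : H, ⟪σ3 x, y⟫ = -⟪x, σ3 y⟫)
    (hcomm : ∀ σ ∈ ({σ1, σ2, σ3} : Set (Module.End ℝ H)),
      ∀ I ∈ ({I1, I2, I3} : Set (Module.End ℝ H)), σ * I = I * σ) :
    (∀ x y : H, ⟪(σ1 * I1 + σ2 * I2 + σ3 * I3) x, y⟫ = ⟪x, (σ1 * I1 + σ2 * I2 + σ3 * I3) y⟫) ∧
    LinearMap.trace ℝ H (σ1 * I1 + σ2 * I2 + σ3 * I3) = 0 ∧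
    ((σ1 * I1 + σ2 * I2 + σ3 * I3) * I1 + I1 * (σ1 * I1 + σ2 * I2 + σ3 * I3) = -(2 • σ1) ∧
     (σ1 * I1 + σ2 * I2 + σ3 * I3) * I2 + I2 * (σ1 * I1 + σ2 * I2 + σ3 * I3) = -(2 • σ2) ∧
     (σ1 * I1 + σ2 * I2 + σ3 * I3) * I3 + I3 * (σ1 * I1 + σ2 * I2 + σ3 * I3) = -(2 • σ3)) := by
  -- extract commutation relations
  have c11 : σ1 * I1 = I1 * σ1 := hcomm σ1 (by simp) I1 (by simp)
  have c12 : σ1 * I2 = I2 * σ1 := hcomm σ1 (by simp) I2 (by simp)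
  have c13 : σ1 * I3 = I3 * σ1 := hcomm σ1 (by simp) I3 (by simp)
  have c21 : σ2 * I1 = I1 * σ2 := hcomm σ2 (by simp) I1 (by simp)
  have c22 : σ2 * I2 = I2 * σ2 := hcomm σ2 (by simp) I2 (by simp)
  have c23 : σ2 * I3 = I3 * σ2 := hcomm σ2 (by simp) I3 (by simp)
  have c31 : σ3 * I1 = I1 * σ3 := hcomm σ3 (by simp) I1 (by simp)
  have c32 : σ3 * I2 = I2 * σ3 := hcomm σ3 (by simp) I2 (by simp)
  have c33 : σ3 * I3 = I3 * σ3 := hcomm σ3 (by simp) I3 (by simp)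
  refine ⟨?_, ?_, ?_, ?_, ?_⟩
  · intro x y
    have term : ∀ (σ I : Module.End ℝ H), (∀ x y : H, ⟪σ x, y⟫ = -⟪x, σ y⟫) →
        (∀ x y : H, ⟪I x, y⟫ = -⟪x, I y⟫) → σ * I = I * σ →
        ⟪σ (I x), y⟫ = ⟪x, σ (I y)⟫ := by
      intro σ I hσ hI hc
      have hIc : I (σ y) = σ (I y) := by
        have := LinearMap.ext_iff.mp hc y
        simpa [Module.End.mul_apply] using this.symm
      rw [hσ, hI, hIc, neg_neg]
    simp only [LinearMap.add_apply, Module.End.mul_apply, inner_add_left, inner_add_right]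
    rw [term σ1 I1 hs1 hIskew1 c11, term σ2 I2 hs2 hIskew2 c22, term σ3 I3 hs3 hIskew3 c33]
  · have key : ∀ (σ Ia Ib Ic : Module.End ℝ H), σ * Ib = Ib * σ →
        Ib * Ia = -Ic → Ic * Ib = -Ia → Ib * Ib = -1 →
        LinearMap.trace ℝ H (σ * Ia) = 0 := by
      intro σ Ia Ib Ic hc hba hcb hbb
      have h1 : Ib * (σ * Ia * -Ib) = -(σ * Ia) := by
        calc Ib * (σ * Ia * -Ib) = σ * (Ib * Ia) * -Ib := by rw [← mul_assoc, ← mul_assoc, ← hc]; noncomm_ring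
        _ = σ * (Ic * Ib) := by rw [hba]; noncomm_ring
        _ = -(σ * Ia) := by rw [hcb]; noncomm_ring
      have h2 : LinearMap.trace ℝ H (Ib * (σ * Ia * -Ib)) = LinearMap.trace ℝ H (σ * Ia) := by
        rw [LinearMap.trace_mul_comm]
        have : σ * Ia * -Ib * Ib = σ * Ia * -(Ib * Ib) := by noncomm_ring
        rw [this, hbb]
        norm_num
      rw [h1, map_neg] at h2
      linarith
    rw [map_add, map_add, key σ1 I1 I2 I3 c12 hI21 hI32 hI2,
      key σ2 I2 I3 I1 c23 hI32 hI13 hI3, key σ3 I3 I1 I2 c31 hI13 hI21 hI1]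
    ring
  · have L : (σ1 * I1 + σ2 * I2 + σ3 * I3) * I1
        = σ1 * (I1 * I1) + σ2 * (I2 * I1) + σ3 * (I3 * I1) := by noncomm_ring
    have R : I1 * (σ1 * I1 + σ2 * I2 + σ3 * I3)
        = σ1 * (I1 * I1) + σ2 * (I1 * I2) + σ3 * (I1 * I3) := by
      rw [mul_add, mul_add, ← mul_assoc, ← mul_assoc, ← mul_assoc, ← c11, ← c21, ← c31]
      noncomm_ring
    rw [L, R, hI1, hI21, hI31, hI12, hI13]
    noncomm_ring
  · have L : (σ1 * I1 + σ2 * I2 + σ3 * I3) * I2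
        = σ1 * (I1 * I2) + σ2 * (I2 * I2) + σ3 * (I3 * I2) := by noncomm_ring
    have R : I2 * (σ1 * I1 + σ2 * I2 + σ3 * I3)
        = σ1 * (I2 * I1) + σ2 * (I2 * I2) + σ3 * (I2 * I3) := by
      rw [mul_add, mul_add, ← mul_assoc, ← mul_assoc, ← mul_assoc, ← c12, ← c22, ← c32]
      noncomm_ring
    rw [L, R, hI12, hI2, hI32, hI21, hI23]
    noncomm_ring
  · have L : (σ1 * I1 + σ2 * I2 + σ3 * I3) * I3
        = σ1 * (I1 * I3) + σ2 * (I2 * I3) + σ3 * (I3 * I3) := by noncomm_ring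
    have R : I3 * (σ1 * I1 + σ2 * I2 + σ3 * I3)
        = σ1 * (I3 * I1) + σ2 * (I3 * I2) + σ3 * (I3 * I3) := by
      rw [mul_add, mul_add, ← mul_assoc, ← mul_assoc, ← mul_assoc, ← c13, ← c23, ← c33]
      noncomm_ring
    rw [L, R, hI13, hI23, hI3, hI31, hI32]
    noncomm_ring
end
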